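/- arXiv:1504.02520 — 6 statements merged into one kernel-verified Lean document; each statement's English description precedes it below -/
import Mathlib

section
/- A partition-preserving transformation f = [f_1,…,f_m; f̄] ∈ T(X,P) is idempotent if and only if: (i) f̄ is idempotent in T_m, (ii) f_i is idempotent in T_{n_i} for all i in the image of f̄, and (iii) im(f_i) ⊆ im(f_{i f̄}) for all i not in the image of f̄. -/
/-- A partition-preserving transformation `f = [f_1,…,f_m; f̄]` (of `X` with blocks
`C_i = {i} × [n_i]`) is idempotent iff (i) `f̄` is idempotent, (ii) `f_i` is idempotent for
all `i ∈ im f̄`, and (iii) `im f_i ⊆ im f_{i f̄}` for all `i ∉ im f̄`.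
Here `F (i,j) = (f̄ i, f_i j)` on the blocks, so `f_i j = (F (i,j)).2`. -/
theorem idempotent_characterisation (m : ℕ) (n : Fin m → ℕ) (hn : ∀ i, 1 ≤ n i)
    (F : Fin m × ℕ → Fin m × ℕ) (fb : Fin m → Fin m)
    (hF : ∀ i : Fin m, ∀ j < n i, (F (i, j)).1 = fb i ∧ (F (i, j)).2 < n (fb i)) :
    (∀ i : Fin m, ∀ j < n i, F (F (i, j)) = F (i, j)) ↔
      ((∀ i, fb (fb i) = fb i) ∧
       (∀ i ∈ Set.range fb, ∀ j < n i, (F (i, (F (i, j)).2)).2 = (F (i, j)).2) ∧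
       (∀ i ∉ Set.range fb, ∀ j < n i, ∃ k < n (fb i), (F (i, j)).2 = (F (fb i, k)).2)) := by
  -- key rewriting: for j < n i, F (i,j) = (fb i, (F (i,j)).2)
  have hpair : ∀ i : Fin m, ∀ j, j < n i → F (i, j) = (fb i, (F (i, j)).2) := by
    intro i j hj
    obtain ⟨h1, _⟩ := hF i j hj
    exact Prod.ext h1 rfl
  constructor
  · intro hid
    have hfix : ∀ i : Fin m, ∀ j, j < n i →
        fb (fb i) = fb i ∧ (F (fb i, (F (i, j)).2)).2 = (F (i, j)).2 := by
      intro i j hj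
      have h2 := (hF i j hj).2
      have := hid i j hj
      rw [hpair i j hj] at this
      have h3 := hpair (fb i) _ h2
      rw [h3] at this
      exact ⟨(Prod.ext_iff.mp this).1, (Prod.ext_iff.mp this).2⟩
    have hi : ∀ i, fb (fb i) = fb i := fun i =>
      (hfix i 0 (hn i)).1
    refine ⟨hi, ?_, ?_⟩
    · rintro i ⟨i', rfl⟩ j hj
      have := (hfix (fb i') j hj).2
      rwa [hi i'] at this
    · intro i _ j hj
      exact ⟨(F (i, j)).2, (hF i j hj).2, ((hfix i j hj).2).symm⟩
  · rintro ⟨h1, h2, h3⟩ i j hj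
    have hlt := (hF i j hj).2
    rw [hpair i j hj]
    rw [hpair (fb i) _ hlt]
    refine Prod.ext (h1 i) ?_
    by_cases hr : i ∈ Set.range fb
    · obtain ⟨i', rfl⟩ := hr
      have hfi : fb (fb i') = fb i' := h1 i'
      rw [hfi]
      exact h2 (fb i') ⟨i', rfl⟩ j hj
    · obtain ⟨k, hk, hkeq⟩ := h3 i hr j hj
      rw [hkeq]
      exact h2 (fb i) ⟨i, rfl⟩ k hk
end

section
/- If f ∈ E(X,P) = ⟨E(T(X,P))⟩ satisfies f̄ = 1 (the induced block map is the identity), then for each i ∈ [m] the component f_i lies in the idempotent-generated submonoid E_{n_i} of T_{n_i}, i.e., f_i is either the identity or non-bijective. -/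
/-- The semigroup of transformations of `X = Σ q, Fin (n q)` preserving the partition
into the blocks `C_q = {q} × [n_q]`, as a submonoid of the full transformation monoid. -/
def TXP (m : ℕ) (n : Fin m → ℕ) : Submonoid (Function.End (Σ q : Fin m, Fin (n q))) where
  carrier := {f | ∀ q : Fin m, ∃ r : Fin m, ∀ x : Σ q : Fin m, Fin (n q), x.1 = q → (f x).1 = r}
  one_mem' := fun q => ⟨q, fun _ hx => hx⟩
  mul_mem' := by
    intro a b ha hb q
    obtain ⟨r, hr⟩ := hb q
    obtain ⟨s, hs⟩ := ha r
    exact ⟨s, fun x hx => hs _ (hr x hx)⟩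

/-- The submonoid of `T(X,P)` generated by its idempotents. -/
def EXP (m : ℕ) (n : Fin m → ℕ) : Submonoid (Function.End (Σ q : Fin m, Fin (n q))) :=
  Submonoid.closure {f | f ∈ TXP m n ∧ f * f = f}

lemma sigma_eq_of_fst_eq {m : ℕ} {n : Fin m → ℕ} (z : Σ q : Fin m, Fin (n q)) (i : Fin m)
    (h : z.1 = i) : ∃ a : Fin (n i), z = ⟨i, a⟩ := by
  obtain ⟨q, b⟩ := z
  dsimp at h
  subst h
  exact ⟨b, rfl⟩

lemma snd_eq_of_mk_eq {m : ℕ} {n : Fin m → ℕ} {i : Fin m} {a b : Fin (n i)}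
    (h : (⟨i, a⟩ : Σ q : Fin m, Fin (n q)) = ⟨i, b⟩) : a = b := by
  simpa using h

/-- Component extraction. -/
lemma exists_component {m : ℕ} {n : Fin m → ℕ} (f : Function.End (Σ q : Fin m, Fin (n q)))
    (i : Fin m) (h : ∀ j : Fin (n i), (f ⟨i, j⟩).1 = i) :
    ∃ c : Fin (n i) → Fin (n i), ∀ j, f ⟨i, j⟩ = ⟨i, c j⟩ := by
  have H : ∀ j : Fin (n i), ∃ a : Fin (n i), f ⟨i, j⟩ = ⟨i, a⟩ :=
    fun j => sigma_eq_of_fst_eq _ _ (h j)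
  exact ⟨fun j => (H j).choose, fun j => (H j).choose_spec⟩

/-- The key invariant, closed under multiplication: if the induced block map of `f`
is injective (on nonempty blocks), then it is the identity and every component of `f`
is the identity or non-bijective. -/
def GoodP (m : ℕ) (n : Fin m → ℕ) (f : Function.End (Σ q : Fin m, Fin (n q))) : Prop :=
  (∀ x y : Σ q : Fin m, Fin (n q), (f x).1 = (f y).1 → x.1 = y.1) →
    (∀ x : Σ q : Fin m, Fin (n q), (f x).1 = x.1) ∧
    (∀ (i : Fin m) (g : Fin (n i) → Fin (n i)),
      (∀ j : Fin (n i), f ⟨i, j⟩ = ⟨i, g j⟩) → (g = id ∨ ¬ Function.Bijective g))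

lemma exp_good {m : ℕ} {n : Fin m → ℕ} {f : Function.End (Σ q : Fin m, Fin (n q))}
    (hf : f ∈ EXP m n) : f ∈ TXP m n ∧ GoodP m n f := by
  induction hf using Submonoid.closure_induction with
  | mem e he =>
    obtain ⟨heT, heI⟩ := he
    refine ⟨heT, fun Hinj => ?_⟩
    have hfix : ∀ x : Σ q : Fin m, Fin (n q), e (e x) = e x := by
      intro x
      exact congrFun heI x
    have hbar : ∀ x : Σ q : Fin m, Fin (n q), (e x).1 = x.1 := by
      intro x
      exact Hinj (e x) x (by rw [hfix x])
    refine ⟨hbar, fun i g hg => ?_⟩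
    by_cases hb : Function.Bijective g
    · left
      funext j
      have h1 : e (e ⟨i, j⟩) = e ⟨i, j⟩ := hfix _
      rw [hg j] at h1
      rw [hg (g j)] at h1
      have := snd_eq_of_mk_eq h1
      exact hb.1 this
    · right; exact hb
  | one =>
    refine ⟨one_mem _, fun _ => ⟨fun x => rfl, fun i g hg => ?_⟩⟩
    left
    funext j
    exact (snd_eq_of_mk_eq (hg j)).symm
  | mul a b ha hb pa pb =>
    obtain ⟨haT, paG⟩ := pa
    obtain ⟨hbT, pbG⟩ := pb
    refine ⟨mul_mem haT hbT, fun Hinj => ?_⟩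
    have hmul : ∀ x : Σ q : Fin m, Fin (n q), (a * b) x = a (b x) := fun _ => rfl
    -- block map of b is injective
    have hbInj : ∀ x y : Σ q : Fin m, Fin (n q), (b x).1 = (b y).1 → x.1 = y.1 := by
      intro x y hxy
      obtain ⟨r, hr⟩ := haT (b x).1
      exact Hinj x y (by rw [hmul, hmul, hr (b x) rfl, hr (b y) hxy.symm])
    obtain ⟨hbBar, hbComp⟩ := pbG hbInj
    -- block map of a is injective
    have haInj : ∀ x y : Σ q : Fin m, Fin (n q), (a x).1 = (a y).1 → x.1 = y.1 := by
      intro x y hxy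
      obtain ⟨r, hr⟩ := haT x.1
      obtain ⟨s, hs⟩ := haT y.1
      have h1 : ((a * b) x).1 = (a x).1 := by
        rw [hmul, hr (b x) (hbBar x), hr x rfl]
      have h2 : ((a * b) y).1 = (a y).1 := by
        rw [hmul, hs (b y) (hbBar y), hs y rfl]
      exact Hinj x y (by rw [h1, h2, hxy])
    obtain ⟨haBar, haComp⟩ := paG haInj
    refine ⟨fun x => by rw [hmul, haBar (b x), hbBar x], fun i g hg => ?_⟩
    obtain ⟨cb, hcb⟩ := exists_component b i (fun j => hbBar ⟨i, j⟩)
    obtain ⟨ca, hca⟩ := exists_component a i (fun j => haBar ⟨i, j⟩)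
    have hgcomp : ∀ j, g j = ca (cb j) := by
      intro j
      have h1 : (a * b) ⟨i, j⟩ = ⟨i, ca (cb j)⟩ := by
        rw [hmul, hcb j, hca (cb j)]
      rw [hg j] at h1
      exact snd_eq_of_mk_eq h1
    rcases haComp i ca hca with haId | haNb
    · rcases hbComp i cb hcb with hbId | hbNb
      · left
        funext j
        rw [hgcomp j, haId, hbId]
        rfl
      · right
        intro hb
        apply hbNb
        rw [← Finite.injective_iff_bijective]
        intro x y hxy
        have : g x = g y := by rw [hgcomp x, hgcomp y, hxy]
        exact hb.1 this
    · right
      intro hb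
      apply haNb
      rw [← Finite.surjective_iff_bijective]
      intro y
      obtain ⟨x, hx⟩ := hb.2 y
      exact ⟨cb x, by rw [← hgcomp x, hx]⟩

/-- If `f ∈ E(X,P)` has identity induced block map, then each component `f_i` lies in
`E_{n_i} = {1} ∪ (T_{n_i} \ S_{n_i})`: it is the identity or non-bijective. -/
theorem component_in_E_of_fbar_eq_one (m : ℕ) (n : Fin m → ℕ)
    (f : Function.End (Σ q : Fin m, Fin (n q))) (hf : f ∈ EXP m n)
    (hbar : ∀ x : Σ q : Fin m, Fin (n q), (f x).1 = x.1) :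
    ∀ (i : Fin m) (g : Fin (n i) → Fin (n i)),
      (∀ j : Fin (n i), f ⟨i, j⟩ = ⟨i, g j⟩) → (g = id ∨ ¬ Function.Bijective g) := by
  have := (exp_good hf).2 (fun x y hxy => by rw [← hbar x, ← hbar y, hxy])
  exact this.2
end

section
/- For a finite set X with |X| = n, the submonoid of T_X generated by all idempotents equals {id_X} ∪ (T_X \ S_X), i.e., the identity together with all non-bijective transformations. -/
/-!
A product of maps is bijective only if every factor is (`X` is finite), and a bijective idempotent
is the identity; so the idempotent-generated submonoid contains no bijection other than `1`.

Conversely, choosing a preimage `s y` of each `y` in the image of a singular `f` gives an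
idempotent `e = s ∘ f` with `f = σ ∘ e`, where `σ` is a permutation extending `s y ↦ y`; `e` is
singular as well. It remains to absorb `σ` into a product of idempotents: as `e` misses some
point `a`, each transposition acts on the range of `e` like a product of at most three maps
`collapse b c` (send `b` to `c`, fix everything else), with `a` serving as a spare slot.
-/

open Function Equiv

namespace Function.End

variable {X : Type*}

theorem eq_one_of_isIdempotentElem_of_surjective {e : Function.End X} (he : IsIdempotentElem e)
    (hs : Surjective e) : e = 1 := by
  funext y
  obtain ⟨x, rfl⟩ := hs y
  exact congrFun he x

theorem eq_one_of_mem_closure_isIdempotentElem_of_bijective [Finite X] {f : Function.End X}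
    (hf : f ∈ Submonoid.closure {e : Function.End X | IsIdempotentElem e}) (hb : Bijective f) :
    f = 1 := by
  induction hf using Submonoid.closure_induction with
  | mem e he => exact eq_one_of_isIdempotentElem_of_surjective he hb.surjective
  | one => rfl
  | mul g h _ _ ihg ihh =>
    have hg : Surjective g := .of_comp hb.surjective
    have hh : Injective h := .of_comp hb.injective
    rw [ihg (Finite.surjective_iff_bijective.mp hg), ihh (Finite.injective_iff_bijective.mp hh),
      one_mul]

theorem exists_perm_mul_isIdempotentElem [Finite X] (f : Function.End X) :
    ∃ σ : Perm X, ∃ e : Function.End X, IsIdempotentElem e ∧ f = MulAction.toEndHom σ * e := by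
  obtain ⟨σ, hσ⟩ := Perm.exists_extending_pair (Set.rangeSplitting f) Subtype.val
    (Set.rangeSplitting_injective f) Subtype.val_injective
  refine ⟨σ, Set.rangeSplitting f ∘ Set.rangeFactorization f, ?_, ?_⟩
  · funext x
    exact congrArg (Set.rangeSplitting f) (Subtype.ext (Set.apply_rangeSplitting f _))
  · funext x
    exact (hσ (Set.rangeFactorization f x)).symm

variable [DecidableEq X]

def collapse (b a : X) : Function.End X := update id b a

theorem collapse_apply (b a x : X) : collapse b a x = if x = b then a else x :=
  update_apply _ _ _ _

theorem isIdempotentElem_collapse (b a : X) : IsIdempotentElem (collapse b a) := by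
  funext x
  show collapse b a (collapse b a x) = collapse b a x
  grind [collapse_apply]

theorem collapse_mem_closure (b a : X) :
    collapse b a ∈ Submonoid.closure {e : Function.End X | IsIdempotentElem e} :=
  Submonoid.subset_closure (isIdempotentElem_collapse b a)

theorem exists_mem_closure_eqOn_swap (a u v : X) :
    ∃ p ∈ Submonoid.closure {e : Function.End X | IsIdempotentElem e},
      ∀ x, x ≠ a → p x = Equiv.swap u v x := by
  by_cases hu : a = u
  · exact ⟨collapse v a, collapse_mem_closure v a, by grind [collapse_apply]⟩
  by_cases hv : a = v
  · exact ⟨collapse u a, collapse_mem_closure u a, by grind [collapse_apply]⟩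
  -- `v ↦ a`, `u ↦ v`, `a ↦ u`
  refine ⟨collapse a u * collapse u v * collapse v a,
    mul_mem (mul_mem (collapse_mem_closure a u) (collapse_mem_closure u v))
      (collapse_mem_closure v a), fun x hx => ?_⟩
  show collapse a u (collapse u v (collapse v a x)) = _
  grind [collapse_apply]

theorem toEndHom_swap_mul_mem_closure {h : Function.End X}
    (hh : h ∈ Submonoid.closure {e : Function.End X | IsIdempotentElem e}) {a : X}
    (ha : a ∉ Set.range h) (u v : X) :
    MulAction.toEndHom (Equiv.swap u v) * h ∈
      Submonoid.closure {e : Function.End X | IsIdempotentElem e} := by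
  obtain ⟨p, hp, hpswap⟩ := exists_mem_closure_eqOn_swap a u v
  have : MulAction.toEndHom (Equiv.swap u v) * h = p * h := by
    funext x
    exact (hpswap (h x) fun hx => ha ⟨x, hx⟩).symm
  exact this ▸ mul_mem hp hh

theorem toEndHom_mul_mem_closure [Finite X] (σ : Perm X) {h : Function.End X}
    (hh : h ∈ Submonoid.closure {e : Function.End X | IsIdempotentElem e})
    (hs : ¬ Surjective h) :
    MulAction.toEndHom σ * h ∈ Submonoid.closure {e : Function.End X | IsIdempotentElem e} := by
  induction σ using Perm.swap_induction_on generalizing h with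
  | one => simpa using hh
  | swap_mul σ u v _ ih =>
    obtain ⟨a, ha⟩ := not_forall.1 hs
    have hσa : σ a ∉ Set.range (MulAction.toEndHom σ * h) :=
      fun ⟨x, hx⟩ => ha ⟨x, σ.injective hx⟩
    rw [map_mul, mul_assoc]
    exact toEndHom_swap_mul_mem_closure (ih hh hs) hσa u v

theorem mem_closure_isIdempotentElem_of_not_bijective [Finite X] {f : Function.End X}
    (hf : ¬ Bijective f) : f ∈ Submonoid.closure {e : Function.End X | IsIdempotentElem e} := by
  obtain ⟨σ, e, he, rfl⟩ := exists_perm_mul_isIdempotentElem f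
  refine toEndHom_mul_mem_closure σ (Submonoid.subset_closure he) fun hs => hf ?_
  rw [eq_one_of_isIdempotentElem_of_surjective he hs, mul_one]
  exact σ.bijective

end Function.End

/-- For a finite set `X`, the submonoid of `T_X` generated by the idempotents is
`{id} ∪ (T_X \ S_X)`, i.e. the identity together with all non-bijective maps. -/
theorem idempotent_generated_submonoid_eq (X : Type*) [Fintype X]
    (f : Function.End X) :
    f ∈ Submonoid.closure {e : Function.End X | e * e = e} ↔
      (f = 1 ∨ ¬ Function.Bijective f) := by
  classical
  refine ⟨fun hf => ?_, ?_⟩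
  · by_cases hb : Bijective f
    · exact .inl (Function.End.eq_one_of_mem_closure_isIdempotentElem_of_bijective hf hb)
    · exact .inr hb
  · rintro (rfl | hf)
    · exact one_mem _
    · exact Function.End.mem_closure_isIdempotentElem_of_not_bijective hf
end

section
/- Suppose e_{ij;f} = g h where g, h ∈ E(X,P), g is an idempotent with g ≠ 1, f : [n_j] → [n_i] injective, i < j. If n_i = n_j then g = e_{ij;f} or g = e_{ji;f^{-1}}; if n_i > n_j then g = e_{ij;f}. -/
lemma sigma_eq_mk' {m : ℕ} {n : Fin m → ℕ} (y : Σ q : Fin m, Fin (n q)) {j : Fin m}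
    (h : y.1 = j) : y = ⟨j, h ▸ y.2⟩ := by
  cases y; subst h; rfl

/-- Suppose `e_{ij;f} = g h` with `g, h ∈ E(X,P)`, `g` idempotent, `g ≠ 1`, `i < j`,
`f : [n_j] → [n_i]` injective, block sizes weakly decreasing. If `n_i = n_j` then
`g = e_{ij;f}` or `g = e_{ji;f⁻¹}`; if `n_i > n_j` then `g = e_{ij;f}`. -/
theorem idempotent_left_factor_of_eijf (m : ℕ) (n : Fin m → ℕ)
    (hmono : ∀ p q : Fin m, p ≤ q → n q ≤ n p)
    (i j : Fin m) (hij : i < j) (f : Fin (n j) → Fin (n i)) (hf : Function.Injective f)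
    (g h : Function.End (Σ q : Fin m, Fin (n q)))
    (hg : g ∈ EXP m n) (hh : h ∈ EXP m n) (hg1 : g ≠ 1) (hgidem : g * g = g)
    (heq : ∀ x : Σ q : Fin m, Fin (n q),
      h (g x) = if hx : x.1 = j then (⟨i, f (hx ▸ x.2)⟩ : Σ q : Fin m, Fin (n q)) else x) :
    (n i = n j →
      ((∀ x : Σ q : Fin m, Fin (n q),
          g x = if hx : x.1 = j then (⟨i, f (hx ▸ x.2)⟩ : Σ q : Fin m, Fin (n q)) else x) ∨
       ((∀ x : Σ q : Fin m, Fin (n q), x.1 ≠ i → g x = x) ∧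
        ∀ a : Fin (n j), g ⟨i, f a⟩ = ⟨j, a⟩))) ∧
    (n j < n i →
      (∀ x : Σ q : Fin m, Fin (n q),
        g x = if hx : x.1 = j then (⟨i, f (hx ▸ x.2)⟩ : Σ q : Fin m, Fin (n q)) else x)) := by
  have hij' : i ≠ j := ne_of_lt hij
  have hgT : g ∈ TXP m n := Submonoid.closure_le.2 (fun x hx => hx.1) hg
  have hgg : ∀ x, g (g x) = g x := fun x => congrFun hgidem x
  have key : ∀ x : Σ q : Fin m, Fin (n q),
      (if hx : (g x).1 = j then (⟨i, f (hx ▸ (g x).2)⟩ : Σ q : Fin m, Fin (n q)) else g x)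
      = (if hx : x.1 = j then (⟨i, f (hx ▸ x.2)⟩ : Σ q : Fin m, Fin (n q)) else x) := by
    intro x
    rw [← heq (g x), hgg x, heq x]
  -- pointwise trichotomy
  have dich : ∀ x : Σ q : Fin m, Fin (n q),
      g x = x ∨ (∃ hx : x.1 = j, g x = ⟨i, f (hx ▸ x.2)⟩)
        ∨ (∃ b : Fin (n j), x = ⟨i, f b⟩ ∧ g x = ⟨j, b⟩) := by
    intro x
    have k := key x
    by_cases hx : x.1 = j
    · rw [dif_pos hx] at k
      by_cases hgx : (g x).1 = j
      · rw [dif_pos hgx] at k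
        left
        have h2 : f (hgx ▸ (g x).2) = f (hx ▸ x.2) := by
          have := (Sigma.mk.inj_iff.mp k).2
          exact eq_of_heq this
        have h3 := hf h2
        rw [sigma_eq_mk' (g x) hgx, h3, ← sigma_eq_mk' x hx]
      · rw [dif_neg hgx] at k
        exact Or.inr (Or.inl ⟨hx, k⟩)
    · rw [dif_neg hx] at k
      by_cases hgx : (g x).1 = j
      · rw [dif_pos hgx] at k
        exact Or.inr (Or.inr ⟨hgx ▸ (g x).2, k.symm, sigma_eq_mk' (g x) hgx⟩)
      · rw [dif_neg hgx] at k
        exact Or.inl k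
  -- specialized dichotomies
  have Ci_dich : ∀ a : Fin (n i), g ⟨i, a⟩ = ⟨i, a⟩ ∨ ∃ b, a = f b ∧ g ⟨i, a⟩ = ⟨j, b⟩ := by
    intro a
    rcases dich ⟨i, a⟩ with h1 | ⟨hx, _⟩ | ⟨b, hb1, hb2⟩
    · exact Or.inl h1
    · exact absurd hx hij'
    · refine Or.inr ⟨b, ?_, hb2⟩
      have := (Sigma.mk.inj_iff.mp hb1).2
      exact eq_of_heq this
  have Cj_dich : ∀ a : Fin (n j), g ⟨j, a⟩ = ⟨j, a⟩ ∨ g ⟨j, a⟩ = ⟨i, f a⟩ := by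
    intro a
    rcases dich ⟨j, a⟩ with h1 | ⟨hx, h2⟩ | ⟨b, hb1, _⟩
    · exact Or.inl h1
    · right
      convert h2 using 3
    · exact absurd (Sigma.mk.inj_iff.mp hb1).1.symm hij'
  have Cq_fix : ∀ x : Σ q : Fin m, Fin (n q), x.1 ≠ i → x.1 ≠ j → g x = x := by
    intro x hxi hxj
    rcases dich x with h1 | ⟨hx, _⟩ | ⟨b, hb1, _⟩
    · exact h1
    · exact absurd hx hxj
    · exact absurd (by rw [hb1]) hxi
  obtain ⟨r, hr⟩ := hgT j
  obtain ⟨s, hs⟩ := hgT i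
  -- if some element of C_i is moved, then block i maps to block j and f is surjective
  have moved : (∃ a : Fin (n i), g ⟨i, a⟩ ≠ ⟨i, a⟩) →
      (∀ a : Fin (n j), g ⟨i, f a⟩ = ⟨j, a⟩) ∧ Function.Surjective f := by
    rintro ⟨a, ha⟩
    rcases Ci_dich a with h1 | ⟨b, hb1, hb2⟩
    · exact absurd h1 ha
    have hsj : s = j := by
      have := hs ⟨i, a⟩ rfl
      rw [hb2] at this
      exact this.symm
    have hsurj : Function.Surjective f := by
      intro a'
      rcases Ci_dich a' with h1 | ⟨b', hb1', _⟩
      · exfalso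
        have := hs ⟨i, a'⟩ rfl
        rw [h1, hsj] at this
        exact hij' this
      · exact ⟨b', hb1'.symm⟩
    refine ⟨fun a' => ?_, hsurj⟩
    rcases Ci_dich (f a') with h1 | ⟨b', hb1', hb2'⟩
    · exfalso
      have := hs ⟨i, f a'⟩ rfl
      rw [h1, hsj] at this
      exact hij' this
    · rw [hb2', hf hb1']
  -- if every element of C_i is fixed, then g = e_{ij;f}
  have fixedCi : (∀ a : Fin (n i), g ⟨i, a⟩ = ⟨i, a⟩) →
      (∀ x : Σ q : Fin m, Fin (n q),
        g x = if hx : x.1 = j then (⟨i, f (hx ▸ x.2)⟩ : Σ q : Fin m, Fin (n q)) else x) := by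
    intro hCi
    have hCj : ∀ a : Fin (n j), g ⟨j, a⟩ = ⟨i, f a⟩ := by
      intro a
      rcases Cj_dich a with h1 | h2
      · exfalso
        apply hg1
        have hrj : r = j := by
          have := hr ⟨j, a⟩ rfl
          rw [h1] at this
          exact this.symm
        funext x
        obtain ⟨q, c⟩ := x
        by_cases hq : q = i
        · subst hq; exact hCi c
        by_cases hq' : q = j
        · subst hq'
          rcases Cj_dich c with h1x | h2x
          · exact h1x
          · exfalso
            have := hr ⟨q, c⟩ rfl
            rw [h2x, hrj] at this
            exact hij' this
        · exact Cq_fix ⟨q, c⟩ hq hq'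
      · exact h2
    intro x
    obtain ⟨q, c⟩ := x
    by_cases hq : q = j
    · subst hq
      rw [dif_pos rfl]
      exact hCj c
    · rw [dif_neg hq]
      by_cases hq' : q = i
      · subst hq'; exact hCi c
      · exact Cq_fix ⟨q, c⟩ hq' hq
  constructor
  · intro _hni
    by_cases hc : ∀ a : Fin (n i), g ⟨i, a⟩ = ⟨i, a⟩
    · exact Or.inl (fixedCi hc)
    · right
      push_neg at hc
      obtain ⟨gif, hsurj⟩ := moved hc
      refine ⟨?_, gif⟩
      intro x hxi
      obtain ⟨q, c⟩ := x
      by_cases hq : q = j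
      · subst hq
        rcases Cj_dich c with h1 | h2
        · exact h1
        · exfalso
          have := hgg ⟨q, c⟩
          rw [h2, gif c] at this
          exact hij' ((Sigma.mk.inj_iff.mp this).1).symm
      · exact Cq_fix ⟨q, c⟩ hxi hq
  · intro hlt
    apply fixedCi
    intro a
    by_contra ha
    obtain ⟨_, hsurj⟩ := moved ⟨a, ha⟩
    have := Fintype.card_le_of_surjective f hsurj
    simp only [Fintype.card_fin] at this
    omega
end

section
/- Let j ∈ [n] and L = {q ∈ [m] : n_q > j}. If f ∈ S = E(X,P) is such that the restriction of f̄ to L is injective and |C_q f| > j for all q ∈ L, then f̄ restricted to L is the identity on L, and f_q ∈ E_{n_q} for all q ∈ L. -/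
/-!
Induct along a factorisation `f = e * y` (so `f x = e (y x)`) with `e` a block-preserving
idempotent. The hypotheses on `f` pass to `y`, which by induction maps every large block (one
with more than `j` points) into itself by an element of `E`. For a large block `C_q`, the image
`f(C_q) = e(y(C_q)) ⊆ e(C_q)` has more than `j` points and lies in a single block `C_r`, so `C_r`
is large as well. Being idempotent, `e` fixes a point of `C_r` and hence maps `C_r` into itself;
so `f` sends both `C_q` and `C_r` into `C_r`, and injectivity of `f̄` on large blocks forces
`r = q`. The restriction of `e` to `C_q` is then idempotent, hence in `E`, and `E` is closed
under composition.
-/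

lemma Function.End.mul_apply {β : Type*} (f g : Function.End β) (x : β) :
    (f * g) x = f (g x) := rfl

section IdOrSingular

variable {α : Type*}

/-- Membership in `E_k = {1} ∪ (T_k \ S_k)`. -/
def IsIdOrSingular (g : α → α) : Prop := g = id ∨ ¬ Function.Bijective g

lemma isIdOrSingular_id : IsIdOrSingular (id : α → α) := Or.inl rfl

lemma IsIdOrSingular.comp [Finite α] {g h : α → α} (hg : IsIdOrSingular g)
    (hh : IsIdOrSingular h) : IsIdOrSingular (g ∘ h) := by
  rcases hg with rfl | hg
  · exact hh
  · exact Or.inr fun hb => hg (Finite.surjective_iff_bijective.mp hb.surjective.of_comp)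

lemma isIdOrSingular_of_idempotent {g : α → α} (hg : ∀ a, g (g a) = g a) :
    IsIdOrSingular g := by
  by_cases hb : Function.Bijective g
  · exact Or.inl (funext fun a => hb.injective (hg a))
  · exact Or.inr hb

end IdOrSingular

section Blocks

variable {ι : Type*} {α : ι → Type*}

def PreservesBlocks (f : Function.End (Σ i, α i)) : Prop :=
  ∀ x y : Σ i, α i, x.1 = y.1 → (f x).1 = (f y).1

def blockImage (f : Function.End (Σ i, α i)) (q : ι) : Set (Σ i, α i) :=
  Set.range fun a : α q => f ⟨q, a⟩

/-- `f̄|_L` is injective, phrased without naming the block map `f̄`. -/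
def BlockInjOn (f : Function.End (Σ i, α i)) (L : Set ι) : Prop :=
  ∀ ⦃x y : Σ i, α i⦄, x.1 ∈ L → y.1 ∈ L → (f x).1 = (f y).1 → x.1 = y.1

def KeepsLargeBlocksLarge (j : ℕ) (f : Function.End (Σ i, α i)) : Prop :=
  ∀ q, j < Nat.card (α q) → j < (blockImage f q).ncard

def ActsOnBlockInE (f : Function.End (Σ i, α i)) (q : ι) : Prop :=
  ∃ g : α q → α q, IsIdOrSingular g ∧ ∀ a, f ⟨q, a⟩ = ⟨q, g a⟩

lemma Sigma.exists_eq_mk_of_fst_eq {x : Σ i, α i} {q : ι} (h : x.1 = q) : ∃ b, x = ⟨q, b⟩ := by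
  obtain ⟨r, b⟩ := x
  subst h
  exact ⟨b, rfl⟩

lemma exists_eq_sigma_mk_of_fst_eq {f : Function.End (Σ i, α i)} {q : ι}
    (hf : ∀ a : α q, (f ⟨q, a⟩).1 = q) : ∃ g : α q → α q, ∀ a, f ⟨q, a⟩ = ⟨q, g a⟩ :=
  ⟨fun a => (Sigma.exists_eq_mk_of_fst_eq (hf a)).choose,
    fun a => (Sigma.exists_eq_mk_of_fst_eq (hf a)).choose_spec⟩

lemma blockImage_mul (e y : Function.End (Σ i, α i)) (q : ι) :
    blockImage (e * y) q = e '' blockImage y q :=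
  Set.range_comp e _

lemma BlockInjOn.of_mul {e y : Function.End (Σ i, α i)} {L : Set ι} (he : PreservesBlocks e)
    (h : BlockInjOn (e * y) L) : BlockInjOn y L :=
  fun _ _ hx hy hxy => h hx hy (he _ _ hxy)

variable [∀ i, Finite (α i)]

lemma KeepsLargeBlocksLarge.of_mul {j : ℕ} {e y : Function.End (Σ i, α i)}
    (h : KeepsLargeBlocksLarge j (e * y)) : KeepsLargeBlocksLarge j y := fun q hq =>
  (h q hq).trans_le <| by
    rw [blockImage_mul]
    exact Set.ncard_image_le (Set.finite_range _)

lemma lt_card_of_mapsTo_block {j : ℕ} {f : Function.End (Σ i, α i)} {q r : ι}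
    (hq : j < (blockImage f q).ncard) (hsub : ∀ a, (f ⟨q, a⟩).1 = r) : j < Nat.card (α r) := by
  have hrange : blockImage f q ⊆ Set.range (Sigma.mk r) := by
    rintro _ ⟨a, rfl⟩
    obtain ⟨b, hb⟩ := Sigma.exists_eq_mk_of_fst_eq (hsub a)
    exact ⟨b, hb.symm⟩
  calc j < (blockImage f q).ncard := hq
    _ ≤ (Set.range (Sigma.mk (β := α) r)).ncard := Set.ncard_le_ncard hrange
    _ = Nat.card (α r) := Set.ncard_range_of_injective sigma_mk_injective

lemma actsOnBlockInE_idempotent_mul {j : ℕ} {e y : Function.End (Σ i, α i)}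
    (he : PreservesBlocks e) (he2 : e * e = e)
    (hinj : BlockInjOn (e * y) {q | j < Nat.card (α q)})
    (hbig : KeepsLargeBlocksLarge j (e * y))
    (hy : ∀ q, j < Nat.card (α q) → ActsOnBlockInE y q)
    {q : ι} (hq : j < Nat.card (α q)) : ActsOnBlockInE (e * y) q := by
  obtain ⟨g, hgE, hg⟩ := hy q hq
  have : Nonempty (α q) := Nat.card_pos_iff.mp (by omega) |>.1
  let a₀ : α q := Classical.arbitrary _
  let z := e ⟨q, g a₀⟩
  have hblock : ∀ a, (e ⟨q, a⟩).1 = z.1 := fun a => he _ _ rfl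
  have hr : j < Nat.card (α z.1) := lt_card_of_mapsTo_block (hbig q hq) fun a => by
    rw [Function.End.mul_apply, hg, hblock]
  obtain ⟨g', -, hg'⟩ := hy z.1 hr
  -- `e` fixes `z`, so it maps the block of `z` into itself.
  have hez : e z = z := congrFun he2 _
  have hqr : q = z.1 := @hinj ⟨q, a₀⟩ ⟨z.1, z.2⟩ hq hr <| by
    rw [Function.End.mul_apply, Function.End.mul_apply, hg, hg', he ⟨z.1, g' z.2⟩ z rfl, hez]
  obtain ⟨h, hh⟩ := exists_eq_sigma_mk_of_fst_eq (f := e) fun a => (hblock a).trans hqr.symm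
  have hidem : ∀ a, h (h a) = h a := fun a => sigma_mk_injective <| by
    rw [← hh, ← hh]
    exact congrFun he2 _
  refine ⟨h ∘ g, (isIdOrSingular_of_idempotent hidem).comp hgE, fun a => ?_⟩
  rw [Function.End.mul_apply, hg, hh, Function.comp_apply]

theorem actsOnBlockInE_of_mem_closure {j : ℕ} {f : Function.End (Σ i, α i)}
    (hf : f ∈ Submonoid.closure {e | PreservesBlocks e ∧ e * e = e})
    (hinj : BlockInjOn f {q | j < Nat.card (α q)}) (hbig : KeepsLargeBlocksLarge j f)
    {q : ι} (hq : j < Nat.card (α q)) : ActsOnBlockInE f q := by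
  induction hf using Submonoid.closure_induction_left generalizing q with
  | one => exact ⟨id, isIdOrSingular_id, fun _ => rfl⟩
  | mul_left e he y _ ih =>
    exact actsOnBlockInE_idempotent_mul he.1 he.2 hinj hbig
      (fun _ hq' => ih (hinj.of_mul he.1) hbig.of_mul hq') hq

end Blocks

lemma preservesBlocks_of_mem_TXP {m : ℕ} {n : Fin m → ℕ}
    {f : Function.End (Σ q : Fin m, Fin (n q))} (hf : f ∈ TXP m n) : PreservesBlocks f :=
  fun x y hxy => by
    obtain ⟨r, hr⟩ := hf x.1
    rw [hr x rfl, hr y hxy.symm]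

lemma EXP_le_closure_preservesBlocks (m : ℕ) (n : Fin m → ℕ) :
    EXP m n ≤ Submonoid.closure {e | PreservesBlocks e ∧ e * e = e} :=
  Submonoid.closure_mono fun _ he => ⟨preservesBlocks_of_mem_TXP he.1, he.2⟩

theorem fbar_identity_on_large_blocks_general (m : ℕ) (n : Fin m → ℕ)
    (j : ℕ)
    (f : Function.End (Σ q : Fin m, Fin (n q))) (hf : f ∈ EXP m n)
    (fbar : Fin m → Fin m)
    (hfbar : ∀ x : Σ q : Fin m, Fin (n q), (f x).1 = fbar x.1)
    (hinj : Set.InjOn fbar {q : Fin m | j < n q})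
    (hbig : ∀ q : Fin m, j < n q →
      j < (Set.range fun a : Fin (n q) => f ⟨q, a⟩).ncard) :
    ∀ q : Fin m, j < n q →
      fbar q = q ∧
      ∃ g : Fin (n q) → Fin (n q), (g = id ∨ ¬ Function.Bijective g) ∧
        ∀ a : Fin (n q), f ⟨q, a⟩ = ⟨q, g a⟩ := by
  intro q hq
  have hf' : f ∈ Submonoid.closure {e | PreservesBlocks e ∧ e * e = e} :=
    EXP_le_closure_preservesBlocks m n hf
  have hinj' : BlockInjOn f {q | j < Nat.card (Fin (n q))} := by
    simp only [Nat.card_fin]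
    exact fun x y hx hy hxy => hinj hx hy (by rwa [hfbar, hfbar] at hxy)
  have hbig' : KeepsLargeBlocksLarge j f := fun r hr => hbig r (by rwa [Nat.card_fin] at hr)
  obtain ⟨g, hgE, hg⟩ :=
    actsOnBlockInE_of_mem_closure hf' hinj' hbig' (by rwa [Nat.card_fin])
  refine ⟨?_, g, hgE, hg⟩
  rw [← hfbar ⟨q, ⟨0, by omega⟩⟩, hg]

/-- Let `j ∈ [n]` and `L = {q ∈ [m] : n_q > j}`. If `f ∈ S = E(X,P)` is such that `f̄|_L` is
injective and `|C_q f| > j` for all `q ∈ L`, then `f̄|_L = id_L` and `f_q ∈ E_{n_q}` for all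
`q ∈ L`. -/
theorem fbar_identity_on_large_blocks (m : ℕ) (n : Fin m → ℕ)
    (hmono : ∀ p q : Fin m, p ≤ q → n q ≤ n p)
    (j : ℕ) (hj1 : 1 ≤ j) (hjn : j ≤ ∑ q : Fin m, n q)
    (f : Function.End (Σ q : Fin m, Fin (n q))) (hf : f ∈ EXP m n)
    (fbar : Fin m → Fin m)
    (hfbar : ∀ x : Σ q : Fin m, Fin (n q), (f x).1 = fbar x.1)
    (hinj : Set.InjOn fbar {q : Fin m | j < n q})
    (hbig : ∀ q : Fin m, j < n q →
      j < (Set.range fun a : Fin (n q) => f ⟨q, a⟩).ncard) :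
    ∀ q : Fin m, j < n q →
      fbar q = q ∧
      ∃ g : Fin (n q) → Fin (n q), (g = id ∨ ¬ Function.Bijective g) ∧
        ∀ a : Fin (n q), f ⟨q, a⟩ = ⟨q, g a⟩ :=
  fbar_identity_on_large_blocks_general m n j f hf fbar hfbar hinj hbig
end

section
/- The number e(X,P) of idempotents of T(X,P) satisfies the recurrence: e(∅,∅) = 1, and for nonempty X, e(X,P) = Σ_A e(X_{A^c}, P_{A^c}) · Σ_{a∈A} Σ_{l=1}^{n_a} C(n_a, l) · l^{n_A − l}, where the outer sum runs over all subsets A ⊆ [m] containing 1, A^c = [m] \ A, n_A = Σ_{a∈A} n_a, and X_{A^c}, P_{A^c} denote the union of the blocks indexed by A^c and the induced partition. -/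
/-- The number of idempotents of `T(X,P)`, for `X = Σ q : ι, Fin (n q)` with blocks
`C_q = {q} × [n_q]`. -/
noncomputable def numIdem (ι : Type) [Fintype ι] (n : ι → ℕ) : ℕ :=
  Nat.card {f : (Σ q : ι, Fin (n q)) → (Σ q : ι, Fin (n q)) //
    (∀ q : ι, ∃ r : ι, ∀ x : Σ q : ι, Fin (n q), x.1 = q → (f x).1 = r) ∧ f ∘ f = f}

open Finset

/-! An idempotent `f` of `T(X,P)` induces an idempotent map on the blocks. Let `A` be the set of
blocks that `f` sends into the same block `C_a` as `C_1`. Idempotence forces `a ∈ A` and sends the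
blocks outside `A` outside `A`, so `f` splits into an idempotent of `T(X_{A^c}, P_{A^c})` and an
idempotent of `X_A` with image in the single block `C_a`; conversely every such pair glues to an
idempotent of `T(X,P)` with this `A`. An idempotent of a nonempty set `Y` with image in `B` is the
same as its image `S ⊆ B` together with an arbitrary map `Y \ S → S`, which gives
`Σ_l C(|B|, l) l^(|Y| - l)` of them. -/

section Idempotent

variable {Y : Type*} [Fintype Y] [DecidableEq Y]

theorem idempotent_and_fixedPoints_eq_iff {g : Y → Y} {S : Finset Y} :
    ((∀ y, g (g y) = g y) ∧ univ.filter (fun y => g y = y) = S) ↔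
      ∀ y, g y ∈ S ∧ (y ∈ S → g y = y) := by
  constructor
  · rintro ⟨hg, rfl⟩ y
    simp [hg]
  · intro h
    refine ⟨fun y => (h (g y)).2 (h y).1, ?_⟩
    ext y
    simp only [mem_filter, mem_univ, true_and]
    exact ⟨fun hy => hy ▸ (h y).1, (h y).2⟩

theorem card_idempotent_fixedPoints_eq (S : Finset Y) :
    Fintype.card {g : Y → Y // (∀ y, g (g y) = g y) ∧ univ.filter (fun y => g y = y) = S} =
      #S ^ (Fintype.card Y - #S) := by
  simp_rw [idempotent_and_fixedPoints_eq_iff]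
  rw [Fintype.card_congr (Equiv.subtypePiEquivPi (p := fun y z => z ∈ S ∧ (y ∈ S → z = y))),
    Fintype.card_pi]
  have hfactor (y : Y) :
      Fintype.card {z // z ∈ S ∧ (y ∈ S → z = y)} = if y ∈ S then 1 else #S := by
    split_ifs with hy
    · rw [Fintype.card_eq_one_iff]
      exact ⟨⟨y, hy, fun _ => rfl⟩, fun z => Subtype.ext (z.2.2 hy)⟩
    · simp [hy, Fintype.card_subtype]
  simp only [hfactor, prod_ite, prod_const_one, prod_const, one_mul]
  rw [filter_not, card_sdiff, filter_mem_eq_inter, univ_inter, inter_univ, card_univ]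

theorem card_idempotent_range_subset [Nonempty Y] (B : Finset Y) :
    Fintype.card {g : Y → Y // (∀ y, g (g y) = g y) ∧ ∀ y, g y ∈ B} =
      ∑ l ∈ Icc 1 #B, (#B).choose l * l ^ (Fintype.card Y - l) := by
  let fixedPoints (g : Y → Y) : Finset Y := univ.filter fun y => g y = y
  have hmaps : Set.MapsTo fixedPoints
      (univ.filter fun g : Y → Y => (∀ y, g (g y) = g y) ∧ ∀ y, g y ∈ B) B.powerset := by
    intro g hg
    rw [mem_coe, mem_filter] at hg
    rw [mem_coe, mem_powerset]
    intro y hy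
    exact (mem_filter.1 hy).2 ▸ hg.2.2 y
  have hfiber (S : Finset Y) (hS : S ∈ B.powerset) :
      #{g ∈ univ.filter fun g : Y → Y => (∀ y, g (g y) = g y) ∧ ∀ y, g y ∈ B |
          fixedPoints g = S} = #S ^ (Fintype.card Y - #S) := by
    rw [← card_idempotent_fixedPoints_eq S, Fintype.card_subtype, filter_filter]
    congr 1
    ext g
    simp only [mem_filter, mem_univ, true_and]
    refine ⟨fun ⟨⟨hidem, _⟩, hfix⟩ => ⟨hidem, hfix⟩, fun h => ⟨⟨h.1, fun y => ?_⟩, h.2⟩⟩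
    exact mem_powerset.1 hS (idempotent_and_fixedPoints_eq_iff.1 h y).1
  have hzero : (0 : ℕ) ^ (Fintype.card Y - 0) = 0 := zero_pow Fintype.card_ne_zero
  rw [Fintype.card_subtype, card_eq_sum_card_fiberwise hmaps, sum_congr rfl hfiber,
    sum_powerset_apply_card (fun l => l ^ (Fintype.card Y - l)), sum_range_succ', hzero,
    smul_zero, add_zero, ← Ico_add_one_right_eq_Icc, sum_Ico_eq_sum_range]
  simp [add_comm]

theorem card_idempotent_into_single_fiber {ι : Type*} [DecidableEq ι] [Nonempty Y]
    (ρ : Y → ι) (A : Finset ι) :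
    Nat.card {g : Y → Y // (∀ y, g (g y) = g y) ∧ ∃ a ∈ A, ∀ y, ρ (g y) = a} =
      ∑ a ∈ A, ∑ l ∈ Icc 1 #{y | ρ y = a},
        (#{y | ρ y = a}).choose l * l ^ (Fintype.card Y - l) := by
  have hunion : (univ.filter fun g : Y → Y => (∀ y, g (g y) = g y) ∧ ∃ a ∈ A, ∀ y, ρ (g y) = a) =
      A.biUnion fun a => univ.filter fun g =>
        (∀ y, g (g y) = g y) ∧ ∀ y, g y ∈ univ.filter fun y => ρ y = a := by
    ext g
    simp only [mem_filter, mem_univ, true_and, mem_biUnion]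
    exact ⟨fun ⟨hidem, a, ha, hρ⟩ => ⟨a, ha, hidem, hρ⟩,
      fun ⟨a, ha, hidem, hρ⟩ => ⟨hidem, a, ha, hρ⟩⟩
  have hdisj : (A : Set ι).PairwiseDisjoint
      fun a => univ.filter fun g : Y → Y =>
        (∀ y, g (g y) = g y) ∧ ∀ y, g y ∈ univ.filter fun y => ρ y = a := by
    intro a _ b _ hab
    refine disjoint_left.2 fun g hga hgb => hab ?_
    obtain ⟨y⟩ := ‹Nonempty Y›
    simp only [mem_filter, mem_univ, true_and] at hga hgb
    exact (hga.2 y).symm.trans (hgb.2 y)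
  rw [Nat.card_eq_fintype_card, Fintype.card_subtype, hunion, card_biUnion hdisj]
  refine sum_congr rfl fun a _ => ?_
  rw [← Fintype.card_subtype, card_idempotent_range_subset]

end Idempotent

section Glue

variable {X : Type*} {p : X → Prop} [DecidablePred p]

theorem forall_iff_forall_subtype_and_compl {Q : X → Prop} :
    (∀ x, Q x) ↔ (∀ y : {x // p x}, Q y) ∧ ∀ z : {x // ¬p x}, Q z :=
  ⟨fun h => ⟨fun y => h y, fun z => h z⟩,
    fun h x => if hx : p x then h.1 ⟨x, hx⟩ else h.2 ⟨x, hx⟩⟩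

def glue (g₁ : {x // p x} → {x // p x}) (g₂ : {x // ¬p x} → {x // ¬p x}) (x : X) : X :=
  if h : p x then g₁ ⟨x, h⟩ else g₂ ⟨x, h⟩

variable (g₁ : {x // p x} → {x // p x}) (g₂ : {x // ¬p x} → {x // ¬p x})

@[simp]
theorem glue_val_left (y : {x // p x}) : glue g₁ g₂ y = g₁ y := dif_pos y.2

@[simp]
theorem glue_val_right (z : {x // ¬p x}) : glue g₁ g₂ z = g₂ z := dif_neg z.2

theorem glue_mem_iff (x : X) : p (glue g₁ g₂ x) ↔ p x := by
  by_cases hx : p x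
  · simpa [glue, hx] using (g₁ ⟨x, hx⟩).2
  · simpa [glue, hx] using (g₂ ⟨x, hx⟩).2

theorem glue_idempotent_iff :
    (∀ x, glue g₁ g₂ (glue g₁ g₂ x) = glue g₁ g₂ x) ↔
      (∀ y, g₁ (g₁ y) = g₁ y) ∧ ∀ z, g₂ (g₂ z) = g₂ z := by
  rw [forall_iff_forall_subtype_and_compl (p := p)]
  simp only [glue_val_left, glue_val_right, Subtype.coe_inj]

variable (p) in
def glueEquiv :
    ({x // p x} → {x // p x}) × ({x // ¬p x} → {x // ¬p x}) ≃
      {f : X → X // ∀ x, p (f x) ↔ p x} where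
  toFun g := ⟨glue g.1 g.2, glue_mem_iff g.1 g.2⟩
  invFun f := (Subtype.map f fun x => (f.2 x).2, Subtype.map f fun x => mt (f.2 x).1)
  left_inv g := Prod.ext (funext fun y => Subtype.ext (glue_val_left g.1 g.2 y))
    (funext fun z => Subtype.ext (glue_val_right g.1 g.2 z))
  right_inv f := Subtype.ext <| funext fun x => by
    by_cases hx : p x <;> simp [glue, hx, Subtype.map]

theorem card_subtype_eq_card_glue (P : (X → X) → Prop) (hP : ∀ f, P f → ∀ x, p (f x) ↔ p x) :
    Nat.card {f // P f} = Nat.card {g : _ × _ // P (glue (p := p) g.1 g.2)} :=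
  Nat.card_congr <| (Equiv.subtypeSubtypeEquivSubtype (hP _)).symm.trans <|
    ((glueEquiv p).subtypeEquiv fun _ => Iff.rfl).symm

end Glue

section BlockIdempotent

variable {X ι : Type*} (π : X → ι)

def IsBlockIdempotent (f : X → X) : Prop :=
  (∀ x y, π x = π y → π (f x) = π (f y)) ∧ ∀ x, f (f x) = f x

theorem card_isBlockIdempotent_congr {Y κ : Type*} (e : X ≃ Y) (π' : Y → κ)
    (h : ∀ x y, π' (e x) = π' (e y) ↔ π x = π y) :
    Nat.card {f // IsBlockIdempotent π f} = Nat.card {g // IsBlockIdempotent π' g} :=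
  Nat.card_congr <| (e.arrowCongr e).subtypeEquiv fun f => by
    simp only [IsBlockIdempotent, Equiv.arrowCongr_apply, Function.comp_apply, e.surjective.forall,
      Equiv.symm_apply_apply, h, e.apply_eq_iff_eq]

variable [DecidableEq ι] [Fintype X]

-- For `x₀ ∈ C_1` this is the set `A` of the recurrence.
def blocksMappedWith (x₀ : X) (f : X → X) : Finset ι :=
  (univ.filter fun x => π (f x) = π (f x₀)).image π

theorem mem_blocksMappedWith {x₀ : X} {f : X → X} {q : ι} :
    q ∈ blocksMappedWith π x₀ f ↔ ∃ x, π (f x) = π (f x₀) ∧ π x = q := by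
  simp [blocksMappedWith]

theorem card_isBlockIdempotent_eq_sum [Fintype ι] (x₀ : X) :
    Nat.card {f // IsBlockIdempotent π f} =
      ∑ A ∈ univ.powerset.filter (fun A => π x₀ ∈ A),
        Nat.card {f // IsBlockIdempotent π f ∧ blocksMappedWith π x₀ f = A} := by
  classical
  have hmaps : Set.MapsTo (blocksMappedWith π x₀) (univ.filter (IsBlockIdempotent π))
      (univ.powerset.filter (fun A => π x₀ ∈ A)) := fun f _ => by
    simpa using (mem_blocksMappedWith π).2 ⟨x₀, rfl, rfl⟩
  rw [Nat.card_eq_fintype_card, Fintype.card_subtype, card_eq_sum_card_fiberwise hmaps]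
  refine sum_congr rfl fun A _ => ?_
  rw [filter_filter, ← Fintype.card_subtype, Nat.card_eq_fintype_card]

variable {π}

theorem blocksMappedWith_eq_iff (hπ : Function.Surjective π) {x₀ : X} {f : X → X}
    (hf : IsBlockIdempotent π f) {A : Finset ι} (hA : π x₀ ∈ A) :
    blocksMappedWith π x₀ f = A ↔
      (∃ a ∈ A, ∀ x, π x ∈ A → π (f x) = a) ∧ ∀ x, π x ∉ A → π (f x) ∉ A := by
  constructor
  · rintro rfl
    refine ⟨⟨π (f x₀), (mem_blocksMappedWith π).2 ⟨f x₀, by rw [hf.2], rfl⟩, fun x hx => ?_⟩,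
      fun x hx hfx => hx ?_⟩
    · obtain ⟨x', hx', hxx'⟩ := (mem_blocksMappedWith π).1 hx
      exact (hf.1 x x' hxx'.symm).trans hx'
    · obtain ⟨x', hx', hfxx'⟩ := (mem_blocksMappedWith π).1 hfx
      have hfx : π (f x) = π (f x₀) := by
        rw [← hf.2 x, hf.1 _ _ hfxx'.symm, hx']
      exact (mem_blocksMappedWith π).2 ⟨x, hfx, rfl⟩
  · rintro ⟨⟨a, haA, ha⟩, hout⟩
    have h₀ : π (f x₀) = a := ha x₀ hA
    ext q
    rw [mem_blocksMappedWith]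
    constructor
    · rintro ⟨x, hx, rfl⟩
      by_contra hq
      exact hout x hq (hx.trans h₀ ▸ haA)
    · intro hq
      obtain ⟨x, rfl⟩ := hπ q
      exact ⟨x, (ha x hq).trans h₀.symm, rfl⟩

end BlockIdempotent

section Splitting

variable {X ι : Type*} [DecidableEq ι] {π : X → ι} {A : Finset ι}

theorem isBlockIdempotent_glue_iff (g₁ : {x // π x ∈ A} → {x // π x ∈ A})
    (g₂ : {x // π x ∉ A} → {x // π x ∉ A}) :
    IsBlockIdempotent π (glue g₁ g₂) ↔
      IsBlockIdempotent (π ∘ Subtype.val) g₁ ∧ IsBlockIdempotent (π ∘ Subtype.val) g₂ := by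
  simp only [IsBlockIdempotent, glue_idempotent_iff, Function.comp_apply]
  constructor
  · rintro ⟨hblock, hidem₁, hidem₂⟩
    exact ⟨⟨fun y y' h => by simpa using hblock y y' h, hidem₁⟩,
      fun z z' h => by simpa using hblock z z' h, hidem₂⟩
  · rintro ⟨⟨hblock₁, hidem₁⟩, hblock₂, hidem₂⟩
    refine ⟨fun x x' h => ?_, hidem₁, hidem₂⟩
    by_cases hx : π x ∈ A
    · have hx' : π x' ∈ A := h ▸ hx
      simpa [glue, hx, hx'] using hblock₁ ⟨x, hx⟩ ⟨x', hx'⟩ h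
    · have hx' : π x' ∉ A := h ▸ hx
      simpa [glue, hx, hx'] using hblock₂ ⟨x, hx⟩ ⟨x', hx'⟩ h

theorem isBlockIdempotent_glue_and_blocksMappedWith_eq_iff [Fintype X]
    (hπ : Function.Surjective π) {x₀ : X} (hA : π x₀ ∈ A)
    (g₁ : {x // π x ∈ A} → {x // π x ∈ A}) (g₂ : {x // π x ∉ A} → {x // π x ∉ A}) :
    IsBlockIdempotent π (glue g₁ g₂) ∧ blocksMappedWith π x₀ (glue g₁ g₂) = A ↔
      ((∀ y, g₁ (g₁ y) = g₁ y) ∧ ∃ a ∈ A, ∀ y, π (g₁ y) = a) ∧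
        IsBlockIdempotent (π ∘ Subtype.val) g₂ := by
  constructor
  · rintro ⟨hf, hblocks⟩
    obtain ⟨⟨a, haA, ha⟩, -⟩ := (blocksMappedWith_eq_iff hπ hf hA).1 hblocks
    refine ⟨⟨((isBlockIdempotent_glue_iff g₁ g₂).1 hf).1.2, a, haA, fun y => ?_⟩,
      ((isBlockIdempotent_glue_iff g₁ g₂).1 hf).2⟩
    simpa using ha y y.2
  · rintro ⟨⟨hidem₁, a, haA, ha⟩, h₂⟩
    have h₁ : IsBlockIdempotent (π ∘ Subtype.val) g₁ :=
      ⟨fun y y' _ => (ha y).trans (ha y').symm, hidem₁⟩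
    have hf := (isBlockIdempotent_glue_iff g₁ g₂).2 ⟨h₁, h₂⟩
    refine ⟨hf, (blocksMappedWith_eq_iff hπ hf hA).2
      ⟨⟨a, haA, fun x hx => by simpa [glue, hx] using ha ⟨x, hx⟩⟩, fun x hx => ?_⟩⟩
    simpa [glue, hx] using (g₂ ⟨x, hx⟩).2

theorem card_isBlockIdempotent_blocksMappedWith_eq [Fintype X] (hπ : Function.Surjective π)
    {x₀ : X} (hA : π x₀ ∈ A) :
    Nat.card {f // IsBlockIdempotent π f ∧ blocksMappedWith π x₀ f = A} =
      Nat.card {g : {x // π x ∈ A} → {x // π x ∈ A} //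
          (∀ y, g (g y) = g y) ∧ ∃ a ∈ A, ∀ y, π (g y) = a} *
        Nat.card {g : {x // π x ∉ A} → {x // π x ∉ A} //
          IsBlockIdempotent (π ∘ Subtype.val) g} := by
  have hpreserve (f : X → X) (hf : IsBlockIdempotent π f ∧ blocksMappedWith π x₀ f = A) (x : X) :
      π (f x) ∈ A ↔ π x ∈ A := by
    obtain ⟨⟨a, haA, ha⟩, hout⟩ := (blocksMappedWith_eq_iff hπ hf.1 hA).1 hf.2
    by_cases hx : π x ∈ A
    · exact iff_of_true (ha x hx ▸ haA) hx
    · exact iff_of_false (hout x hx) hx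
  rw [card_subtype_eq_card_glue (p := fun x => π x ∈ A) _ hpreserve, ← Nat.card_prod]
  exact Nat.card_congr <| (Equiv.subtypeEquivRight fun (g : ({x // π x ∈ A} → {x // π x ∈ A}) ×
      ({x // π x ∉ A} → {x // π x ∉ A})) =>
    isBlockIdempotent_glue_and_blocksMappedWith_eq_iff hπ hA g.1 g.2).trans <|
      Equiv.subtypeProdEquivProd (q := IsBlockIdempotent (π ∘ Subtype.val))
        (p := fun g : {x // π x ∈ A} → {x // π x ∈ A} =>
          (∀ y, g (g y) = g y) ∧ ∃ a ∈ A, ∀ y, π (g y) = a)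

end Splitting

section Sigma

variable {ι : Type*} [Fintype ι] [DecidableEq ι] {β : ι → Type*} [∀ q, Fintype (β q)]

theorem card_sigma_fst_mem (A : Finset ι) :
    Fintype.card {x : Σ q, β q // x.1 ∈ A} = ∑ b ∈ A, Fintype.card (β b) := by
  rw [Fintype.card_congr (Equiv.subtypeSigmaEquiv β (· ∈ A)), Fintype.card_sigma,
    sum_coe_sort A fun b => Fintype.card (β b)]

theorem card_filter_fst_eq_of_mem {A : Finset ι} {a : ι} (ha : a ∈ A) :
    #{y : {x : Σ q, β q // x.1 ∈ A} | y.1.1 = a} = Fintype.card (β a) := by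
  rw [← Fintype.card_subtype]
  exact Fintype.card_congr <| (Equiv.subtypeSubtypeEquivSubtype
    (q := fun x : Σ q, β q => x.1 = a) fun h => h ▸ ha).trans (Equiv.sigmaSubtype a)

end Sigma

theorem numIdem_eq_card_isBlockIdempotent (ι : Type) [Fintype ι] (n : ι → ℕ) :
    numIdem ι n = Nat.card {f // IsBlockIdempotent (Sigma.fst : (Σ q, Fin (n q)) → ι) f} := by
  refine Nat.card_congr (Equiv.subtypeEquivRight fun f => and_congr ⟨?_, ?_⟩ funext_iff)
  · intro h x y hxy
    obtain ⟨r, hr⟩ := h x.1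
    rw [hr x rfl, hr y hxy.symm]
  · intro h q
    by_cases hq : ∃ x : Σ q, Fin (n q), x.1 = q
    · obtain ⟨x, rfl⟩ := hq
      exact ⟨(f x).1, fun y hy => h y x hy⟩
    · exact ⟨q, fun x hx => absurd ⟨x, hx⟩ hq⟩

theorem numIdem_compl_eq_card (ι : Type) [Fintype ι] [DecidableEq ι] (n : ι → ℕ)
    (A : Finset ι) :
    numIdem {q // q ∈ Aᶜ} (fun q => n q.1) =
      Nat.card {g : {x : Σ q, Fin (n q) // x.1 ∉ A} → {x : Σ q, Fin (n q) // x.1 ∉ A} //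
        IsBlockIdempotent (Sigma.fst ∘ Subtype.val) g} := by
  rw [numIdem_eq_card_isBlockIdempotent]
  refine card_isBlockIdempotent_congr _
    ((Equiv.subtypeSigmaEquiv (fun q => Fin (n q)) (· ∈ Aᶜ)).symm.trans
      (Equiv.subtypeEquivRight fun x => mem_compl)) _ fun x y => Subtype.ext_iff.symm

/-- Recurrence for `e(X,P) = |E(T(X,P))|`: it is `1` for empty `X`, and for nonempty `X`,
`e(X,P) = Σ_A e(X_{A^c},P_{A^c}) Σ_{a∈A} Σ_{l=1}^{n_a} C(n_a,l) l^{n_A−l}`, the outer sum over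
all `A ⊆ [m]` containing the first block index. -/
theorem numIdem_recurrence :
    (∀ n : Fin 0 → ℕ, numIdem (Fin 0) n = 1) ∧
    (∀ (m : ℕ) (n : Fin (m + 1) → ℕ), (∀ q, 1 ≤ n q) →
      numIdem (Fin (m + 1)) n =
        ∑ A ∈ Finset.univ.powerset.filter (fun A : Finset (Fin (m + 1)) => 0 ∈ A),
          numIdem {q : Fin (m + 1) // q ∈ Aᶜ} (fun q => n q.1) *
            ∑ a ∈ A, ∑ l ∈ Finset.Icc 1 (n a),
              Nat.choose (n a) l * l ^ ((∑ b ∈ A, n b) - l)) := by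
  refine ⟨fun n => ?_, fun m n hn => ?_⟩
  · rw [numIdem_eq_card_isBlockIdempotent, Nat.card_eq_one_iff_unique]
    exact ⟨inferInstance, ⟨⟨id, fun _ _ h => h, fun _ => rfl⟩⟩⟩
  · let x₀ : Σ q, Fin (n q) := ⟨0, ⟨0, hn 0⟩⟩
    have hsurj : Function.Surjective (Sigma.fst : (Σ q, Fin (n q)) → Fin (m + 1)) :=
      fun q => ⟨⟨q, ⟨0, hn q⟩⟩, rfl⟩
    rw [numIdem_eq_card_isBlockIdempotent, card_isBlockIdempotent_eq_sum _ x₀]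
    refine sum_congr rfl fun A hA => ?_
    have hA₀ : x₀.1 ∈ A := (mem_filter.1 hA).2
    have : Nonempty {x : Σ q, Fin (n q) // x.1 ∈ A} := ⟨⟨x₀, hA₀⟩⟩
    rw [card_isBlockIdempotent_blocksMappedWith_eq hsurj hA₀, mul_comm, numIdem_compl_eq_card,
      card_idempotent_into_single_fiber (fun y : {x : Σ q, Fin (n q) // x.1 ∈ A} => y.1.1),
      card_sigma_fst_mem]
    refine congrArg _ (sum_congr rfl fun a ha => ?_)
    simp [card_filter_fst_eq_of_mem ha]
end
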